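/- For every two non-empty finite subsets A and B of a set S, the l¹-norm of the difference of the normalized characteristic functions χ_A/|A| and χ_B/|B| satisfies |AΔB|/max(|A|,|B|) ≤ |A∖B|/|A| + |B∖A|/|B| ≤ ‖χ_A/|A| − χ_B/|B|‖₁ ≤ 2·|AΔB|/min(|A|,|B|). -/

import Mathlib

/-!
Splitting `A ∪ B` into `A \ B`, `B \ A` and `A ∩ B`, the `l¹` distance of the normalized
indicators is `|A∖B|/|A| + |B∖A|/|B| + |A∩B|·| 1/|A| − 1/|B| |`. Dropping the last term gives the
middle inequality, and replacing both denominators by `max (|A|, |B|)` the first one. For the last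
one, replacing both denominators by `min (|A|, |B|)` bounds the first two terms by `|AΔB|/min`, and
since `|A∩B| ≤ max (|A|, |B|)` the third term is at most `||A| − |B||/min ≤ |AΔB|/min`.
-/

open Finset

theorem sum_abs_div_card_sub_div_card {S : Type*} [DecidableEq S] (A B : Finset S) :
    ∑ s ∈ A ∪ B,
        |(if s ∈ A then (1 : ℝ) else 0) / #A - (if s ∈ B then (1 : ℝ) else 0) / #B| =
      #(A \ B) / #A + #(B \ A) / #B + #(A ∩ B) * |(#A : ℝ)⁻¹ - (#B : ℝ)⁻¹| := by
  have hdisj : Disjoint (A \ B ∪ B \ A) (A ∩ B) := by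
    rw [disjoint_union_left]
    exact ⟨disjoint_sdiff_inter A B, by simpa only [inter_comm] using disjoint_sdiff_inter B A⟩
  rw [union_eq_sdiff_union_sdiff_union_inter, sum_union hdisj, sum_union disjoint_sdiff_sdiff,
    sum_congr (s₂ := A \ B) rfl (g := fun _ ↦ (#A : ℝ)⁻¹) fun s hs ↦ by simp [mem_sdiff.1 hs],
    sum_congr (s₂ := B \ A) rfl (g := fun _ ↦ (#B : ℝ)⁻¹) fun s hs ↦ by simp [mem_sdiff.1 hs],
    sum_congr (s₂ := A ∩ B) rfl (g := fun _ ↦ |(#A : ℝ)⁻¹ - (#B : ℝ)⁻¹|) fun s hs ↦ by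
      simp [mem_inter.1 hs]]
  simp only [sum_const, nsmul_eq_mul, div_eq_mul_inv]

theorem abs_card_sub_card_le_card_sdiff_add_card_sdiff {S : Type*} [DecidableEq S]
    (A B : Finset S) : |(#A : ℝ) - #B| ≤ #(A \ B) + #(B \ A) := by
  have hA : (#A : ℝ) = #(A \ B) + #(A ∩ B) := by
    exact_mod_cast (card_sdiff_add_card_inter A B).symm
  have hB : (#B : ℝ) = #(B \ A) + #(A ∩ B) := by
    rw [inter_comm]
    exact_mod_cast (card_sdiff_add_card_inter B A).symm
  rw [hA, hB, add_sub_add_right_eq_sub]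
  exact abs_sub_le_iff.2 ⟨by linarith [(#(B \ A)).cast_nonneg (α := ℝ)],
    by linarith [(#(A \ B)).cast_nonneg (α := ℝ)]⟩

theorem add_div_max_le_div_add_div {x y a b : ℝ} (hx : 0 ≤ x) (hy : 0 ≤ y) (ha : 0 < a)
    (hb : 0 < b) : (x + y) / max a b ≤ x / a + y / b := by
  rw [add_div]
  gcongr
  exacts [le_max_left a b, le_max_right a b]

theorem div_add_div_le_add_div_min {x y a b : ℝ} (hx : 0 ≤ x) (hy : 0 ≤ y) (ha : 0 < a)
    (hb : 0 < b) : x / a + y / b ≤ (x + y) / min a b := by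
  rw [add_div]
  gcongr
  exacts [min_le_left a b, min_le_right a b]

theorem mul_abs_inv_sub_inv_le_abs_sub_div_min {i a b : ℝ} (ha : 0 < a) (hb : 0 < b)
    (hi_le : i ≤ max a b) : i * |a⁻¹ - b⁻¹| ≤ |a - b| / min a b := by
  wlog hab : a ≤ b generalizing a b
  · rw [abs_sub_comm, abs_sub_comm a, min_comm]
    exact this hb ha (max_comm a b ▸ hi_le) (le_of_not_ge hab)
  rw [max_eq_right hab] at hi_le
  rw [min_eq_left hab, abs_sub_comm a, abs_of_nonneg (sub_nonneg.2 hab),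
    inv_sub_inv ha.ne' hb.ne', abs_of_nonneg (by have := sub_nonneg.2 hab; positivity)]
  calc i * ((b - a) / (a * b)) = (b - a) / a * (i / b) := by field_simp
    _ ≤ (b - a) / a * 1 := by
      gcongr
      exact (div_le_one hb).2 hi_le
    _ = (b - a) / a := mul_one _

theorem stmt_0 {S : Type*} [DecidableEq S] (A B : Finset S)
    (hA : A.Nonempty) (hB : B.Nonempty) :
    (((A \ B) ∪ (B \ A)).card : ℝ) / (max A.card B.card : ℕ) ≤
        ((A \ B).card : ℝ) / A.card + ((B \ A).card : ℝ) / B.card ∧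
    ((A \ B).card : ℝ) / A.card + ((B \ A).card : ℝ) / B.card ≤
        ∑ s ∈ A ∪ B,
          |(if s ∈ A then (1 : ℝ) else 0) / A.card - (if s ∈ B then (1 : ℝ) else 0) / B.card| ∧
    ∑ s ∈ A ∪ B,
        |(if s ∈ A then (1 : ℝ) else 0) / A.card - (if s ∈ B then (1 : ℝ) else 0) / B.card| ≤
      2 * (((A \ B) ∪ (B \ A)).card : ℝ) / (min A.card B.card : ℕ) := by
  have hA_pos : (0 : ℝ) < #A := by exact_mod_cast hA.card_pos
  have hB_pos : (0 : ℝ) < #B := by exact_mod_cast hB.card_pos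
  have hcard_symmDiff : (#(A \ B ∪ B \ A) : ℝ) = #(A \ B) + #(B \ A) := by
    exact_mod_cast card_union_of_disjoint disjoint_sdiff_sdiff
  have hcard_inter : (#(A ∩ B) : ℝ) ≤ max (#A : ℝ) #B :=
    le_max_of_le_left (by exact_mod_cast card_le_card inter_subset_left)
  rw [sum_abs_div_card_sub_div_card, hcard_symmDiff, Nat.cast_max, Nat.cast_min]
  refine ⟨add_div_max_le_div_add_div (by positivity) (by positivity) hA_pos hB_pos,
    le_add_of_nonneg_right (by positivity), ?_⟩
  calc _ ≤ (#(A \ B) + #(B \ A) : ℝ) / min (#A : ℝ) #B +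
          |(#A : ℝ) - #B| / min (#A : ℝ) #B :=
        add_le_add (div_add_div_le_add_div_min (by positivity) (by positivity) hA_pos hB_pos)
          (mul_abs_inv_sub_inv_le_abs_sub_div_min hA_pos hB_pos hcard_inter)
    _ ≤ (#(A \ B) + #(B \ A) : ℝ) / min (#A : ℝ) #B +
          (#(A \ B) + #(B \ A) : ℝ) / min (#A : ℝ) #B := by
        gcongr
        exact abs_card_sub_card_le_card_sdiff_add_card_sdiff A B
    _ = _ := by ring
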